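/- arXiv:2510.00768 — 6 statements merged into one kernel-verified Lean document; each statement's English description precedes it below -/
import Mathlib

section
/- Let γ > 1 and 0 < r < ρ. Then (( (ρ − r)/γ + r )^(−γ)) · r^(γ−1) ≤ 1/ρ, with strict inequality when r < ρ. -/
/-! The point `(ρ - r)/γ + r` is the mean of `ρ` and `r` with weights `1/γ` and `1 - 1/γ`, so
weighted AM–GM bounds it strictly from below by `ρ^(1/γ) r^(1 - 1/γ)` when `r ≠ ρ`; raising to the
power `γ` gives `ρ r^(γ-1) < ((ρ - r)/γ + r)^γ`, which is the claim after dividing by `ρ` and by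
`((ρ - r)/γ + r)^γ`. -/

open Real

theorem mul_rpow_sub_one_lt_rpow_weighted_mean {γ x y : ℝ} (hγ : 1 < γ) (hx : 0 ≤ x) (hy : 0 ≤ y)
    (hxy : x ≠ y) : x * y ^ (γ - 1) < ((x - y) / γ + y) ^ γ := by
  have hγ₀ : 0 < γ := by linarith
  have hw₁ : 0 < 1 / γ := by positivity
  have hw₂ : 0 < 1 - 1 / γ := by
    rw [sub_pos, div_lt_one hγ₀]
    exact hγ
  have amgm : x ^ (1 / γ) * y ^ (1 - 1 / γ) < (x - y) / γ + y := by
    have h := (geom_mean_lt_arith_mean2_weighted_iff_of_pos hw₁ hw₂ hx hy (by ring)).2 hxy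
    convert h using 1
    ring
  calc x * y ^ (γ - 1)
      = (x ^ (1 / γ) * y ^ (1 - 1 / γ)) ^ γ := by
        rw [mul_rpow (by positivity) (by positivity), ← rpow_mul hx, ← rpow_mul hy,
          one_div_mul_cancel hγ₀.ne', rpow_one, sub_mul, one_div_mul_cancel hγ₀.ne', one_mul]
    _ < ((x - y) / γ + y) ^ γ := rpow_lt_rpow (by positivity) amgm hγ₀

/-- For `γ > 1` and `0 < r < ρ`,
`((ρ − r)/γ + r)^(−γ) · r^(γ−1) ≤ 1/ρ`, with strict inequality when `r < ρ`. -/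
theorem stmt_2 (γ ρ r : ℝ) (hγ : 1 < γ) (hr : 0 < r) (hrρ : r < ρ) :
    ((ρ - r) / γ + r) ^ (-γ) * r ^ (γ - 1) ≤ 1 / ρ ∧
    ((ρ - r) / γ + r) ^ (-γ) * r ^ (γ - 1) < 1 / ρ := by
  have hρ : 0 < ρ := hr.trans hrρ
  have hmean : 0 < (ρ - r) / γ + r := by
    have : 0 < (ρ - r) / γ := div_pos (by linarith) (by linarith)
    linarith
  have key := mul_rpow_sub_one_lt_rpow_weighted_mean hγ hρ.le hr.le hrρ.ne'
  have hlt : ((ρ - r) / γ + r) ^ (-γ) * r ^ (γ - 1) < 1 / ρ := by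
    rw [rpow_neg hmean.le, inv_mul_eq_div, div_lt_div_iff₀ (rpow_pos_of_pos hmean γ) hρ, one_mul,
      mul_comm]
    exact key
  exact ⟨hlt.le, hlt⟩
end

section
/- Let γ > 1, r > 0, ρ > r, and y > 0, and let x̲ satisfy r·x̲ + y > 0. Then for all x ≥ x̲, (1/ρ)·(rx + y)^(1−γ)/(1−γ) ≤ ((ρ−r)/γ + r)^(−γ)·(x + y/r)^(1−γ)/(1−γ). -/
/-- For `γ > 1`, `0 < r < ρ`, `y > 0` and `r x̲ + y > 0`, for all `x ≥ x̲`: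
`(1/ρ)(r x + y)^(1−γ)/(1−γ) ≤ ((ρ−r)/γ + r)^(−γ) (x + y/r)^(1−γ)/(1−γ)`. -/
theorem stmt_4 (γ ρ r y xlow : ℝ) (hγ : 1 < γ) (hr : 0 < r) (hrρ : r < ρ)
    (hy : 0 < y) (hbc : 0 < r * xlow + y) :
    ∀ x : ℝ, xlow ≤ x →
      (1 / ρ) * ((r * x + y) ^ (1 - γ) / (1 - γ))
        ≤ ((ρ - r) / γ + r) ^ (-γ) * ((x + y / r) ^ (1 - γ) / (1 - γ)) := by
  intro x hx
  have hρ : 0 < ρ := hr.trans hrρ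
  have hγ0 : 0 < γ := by linarith
  set A : ℝ := (ρ - r) / γ + r with hA
  have hApos : 0 < A := by
    have : 0 < (ρ - r) / γ := div_pos (by linarith) hγ0
    positivity
  have hzy : 0 < r * x + y := by nlinarith
  have hz : 0 < x + y / r := by
    have : r * (x + y / r) = r * x + y := by field_simp
    nlinarith [mul_pos_iff.mp (this ▸ hzy)]
  have hrw : r * x + y = r * (x + y / r) := by field_simp
  -- Bernoulli: ρ/r ≤ (A/r)^γ
  have hs : (0:ℝ) ≤ (ρ - r) / (γ * r) := div_nonneg (by linarith) (by positivity)
  have hbern := one_add_mul_self_le_rpow_one_add (by linarith : (-1:ℝ) ≤ (ρ - r) / (γ * r)) hγ.le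
  have h1 : 1 + (ρ - r) / (γ * r) = A / r := by field_simp [hA]; rw [hA]; field_simp <;> ring
  have h2 : 1 + γ * ((ρ - r) / (γ * r)) = ρ / r := by
    field_simp; ring
  rw [h1, h2] at hbern
  -- key: A ^ (-γ) ≤ (1/ρ) * r ^ (1-γ)
  have hkey : A ^ (-γ) ≤ (1 / ρ) * r ^ (1 - γ) := by
    have hAr : (A / r) ^ γ = A ^ γ / r ^ γ := Real.div_rpow hApos.le hr.le γ
    rw [hAr] at hbern
    have hrγ : (0:ℝ) < r ^ γ := Real.rpow_pos_of_pos hr γ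
    have hAγ : (0:ℝ) < A ^ γ := Real.rpow_pos_of_pos hApos γ
    have hρA : ρ * r ^ (γ - 1) ≤ A ^ γ := by
      have := (div_le_div_iff₀ hr hrγ).mp hbern
      have hsplit : r ^ γ = r ^ (γ - 1) * r := by
        rw [← Real.rpow_add_one hr.ne' (γ-1)]; ring_nf
      nlinarith
    rw [Real.rpow_neg hApos.le, Real.rpow_sub hr, Real.rpow_one]
    have hpos : 0 < ρ * r ^ (γ - 1) := by positivity
    have h3 : (A ^ γ)⁻¹ ≤ (ρ * r ^ (γ - 1))⁻¹ := inv_anti₀ hpos hρA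
    have h4 : 1 / ρ * (r / r ^ γ) = (ρ * r ^ (γ - 1))⁻¹ := by
      have hsplit2 : r ^ γ = r ^ (γ - 1) * r := by
        rw [← Real.rpow_add_one hr.ne' (γ - 1)]; ring_nf
      rw [hsplit2]; field_simp
    linarith
  -- finish
  have hzpow : (0:ℝ) < (x + y / r) ^ (1 - γ) := Real.rpow_pos_of_pos hz _
  have hN : (x + y / r) ^ (1 - γ) / (1 - γ) < 0 :=
    div_neg_of_pos_of_neg hzpow (by linarith)
  rw [hrw, Real.mul_rpow hr.le hz.le]
  have : (1 / ρ) * (r ^ (1 - γ) * (x + y / r) ^ (1 - γ) / (1 - γ))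
      = (1 / ρ * r ^ (1 - γ)) * ((x + y / r) ^ (1 - γ) / (1 - γ)) := by ring
  rw [this]
  exact mul_le_mul_of_nonpos_right hkey hN.le
end

section
/- Let γ > 1, r > 0, ρ > r, y > 0. The function ǔ(x) = (1/ρ)·(rx + y)^(1−γ)/(1−γ) satisfies the strict differential inequality ρ·ǔ(x) < (rx + y)·ǔ'(x) + (γ/(1−γ))·(ǔ'(x))^(1−1/γ) for every x with rx + y > 0. -/
/-- For `γ > 1`, `0 < r < ρ`, `y > 0`, the function
`ǔ(x) = (1/ρ)(r x + y)^(1−γ)/(1−γ)` is differentiable with derivative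
`ǔ'(x) = (r/ρ)(r x + y)^(−γ)` at every `x` with `r x + y > 0`, and satisfies the strict
subsolution inequality `ρ ǔ(x) < (r x + y) ǔ'(x) + (γ/(1−γ)) (ǔ'(x))^(1−1/γ)`. -/
theorem stmt_6 (γ ρ r y : ℝ) (hγ : 1 < γ) (hr : 0 < r) (hrρ : r < ρ) (hy : 0 < y) :
    ∀ x : ℝ, 0 < r * x + y →
      HasDerivAt (fun z : ℝ => (1 / ρ) * ((r * z + y) ^ (1 - γ) / (1 - γ)))
        ((r / ρ) * (r * x + y) ^ (-γ)) x ∧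
      ρ * ((1 / ρ) * ((r * x + y) ^ (1 - γ) / (1 - γ)))
        < (r * x + y) * ((r / ρ) * (r * x + y) ^ (-γ))
          + (γ / (1 - γ)) * ((r / ρ) * (r * x + y) ^ (-γ)) ^ (1 - 1 / γ) := by
  intro x hx
  have hρ : (0:ℝ) < ρ := hr.trans hrρ
  have hγ1 : (1:ℝ) - γ ≠ 0 := by linarith
  have hγ0 : γ ≠ 0 := by positivity
  constructor
  · have h1 : HasDerivAt (fun z : ℝ => r * z + y) r x := by
      simpa using ((hasDerivAt_id x).const_mul r).add_const y
    have h2 := h1.rpow_const (p := 1 - γ) (Or.inl hx.ne')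
    have h3 := (h2.div_const (1 - γ)).const_mul (1 / ρ)
    refine h3.congr_deriv ?_
    rw [show (1:ℝ) - γ - 1 = -γ by ring]
    field_simp
  · set a := r * x + y with ha
    set t := r / ρ with htdef
    set α := 1 - 1 / γ with hαdef
    have ht0 : 0 < t := div_pos hr hρ
    have ht1 : t < 1 := (div_lt_one hρ).mpr hrρ
    have hα0 : 0 < α := by
      have : 1 / γ < 1 := by rw [div_lt_one (by linarith)]; exact hγ
      simp only [hαdef]; linarith
    have hα1 : α < 1 := by
      have : 0 < 1 / γ := by positivity
      simp only [hαdef]; linarith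
    have key : t ^ α < 1 + α * (t - 1) := by
      have := rpow_one_add_lt_one_add_mul_self (s := t - 1) (by linarith)
        (by intro h; apply ht1.ne; linarith) hα0 hα1
      simpa using this
    have hA : 0 < a ^ (1 - γ) := Real.rpow_pos_of_pos hx _
    have hpow : (t * a ^ (-γ)) ^ α = t ^ α * a ^ (1 - γ) := by
      have hm : -γ * α = 1 - γ := by
        simp only [hαdef]; field_simp; ring
      rw [Real.mul_rpow ht0.le (Real.rpow_nonneg hx.le _), ← Real.rpow_mul hx.le, hm]
    have haa : a * a ^ (-γ) = a ^ (1 - γ) := by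
      rw [show (1:ℝ) - γ = 1 + -γ by ring, Real.rpow_add hx, Real.rpow_one]
    rw [hpow]
    have hρne : ρ ≠ 0 := hρ.ne'
    have hlhs : ρ * (1 / ρ * (a ^ (1 - γ) / (1 - γ))) = a ^ (1 - γ) / (1 - γ) := by
      field_simp
    rw [hlhs, show a * (t * a ^ (-γ)) = t * (a * a ^ (-γ)) by ring, haa]
    set A := a ^ (1 - γ)
    have hc : γ / (1 - γ) < 0 := div_neg_of_pos_of_neg (by linarith) (by linarith)
    have h4 : γ / (1 - γ) * (t ^ α * A) > γ / (1 - γ) * ((1 + α * (t - 1)) * A) := by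
      have h5 : γ / (1 - γ) * t ^ α > γ / (1 - γ) * (1 + α * (t - 1)) :=
        mul_lt_mul_of_neg_left key hc
      nlinarith [mul_lt_mul_of_pos_right h5 hA]
    have hid : t * A + γ / (1 - γ) * ((1 + α * (t - 1)) * A) = A / (1 - γ) := by
      simp only [hαdef]
      field_simp
      ring
    linarith
end

section
/- Let λ₁, λ₂ > 0 and suppose nonnegative sequences (G_{i,1}), (G_{i,2}) (indexed by i ∈ ℕ, summable) satisfy G_{i,j} = (1 − λ_j h) Σ_k β_i(x_k + h s_{k,j}) G_{k,j} + λ_{3−j} h G_{i,3−j} for j = 1,2 and all i, where for each k and j the coefficients satisfy β_i(x_k + h s_{k,j}) ≥ 0 and Σ_i β_i(x_k + h s_{k,j}) = 1, together with the normalization Σ_i G_{i,1} + Σ_i G_{i,2} = 1/Δx. Then Σ_i G_{i,j} · Δx = λ_{3−j}/(λ₁ + λ₂) for j = 1, 2. -/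
lemma aux_sum (lam lam' h : ℝ) (G G' : ℕ → ℝ)
    (hS : Summable G) (hS' : Summable G')
    (β : ℕ → ℕ → ℝ)
    (hβsum : ∀ k, HasSum (fun i => β i k) 1)
    (hdbl : Summable (fun p : ℕ × ℕ => β p.1 p.2 * G p.2))
    (hscheme : ∀ i, G i = (1 - lam * h) * (∑' k, β i k * G k) + lam' * h * G' i) :
    lam * h * ∑' i, G i = lam' * h * ∑' i, G' i := by
  have hA : Summable (fun i => ∑' k, β i k * G k) := hdbl.prod
  have hswap : ∑' i, (∑' k, β i k * G k) = ∑' i, G i := by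
    rw [← Summable.tsum_comm (f := fun i k => β i k * G k) hdbl]
    congr 1
    funext k
    rw [tsum_mul_right, (hβsum k).tsum_eq, one_mul]
  have := tsum_congr (L := SummationFilter.unconditional ℕ) hscheme
  rw [Summable.tsum_add (hA.mul_left _) (hS'.mul_left _), tsum_mul_left, tsum_mul_left,
    hswap] at this
  nlinarith [this]

/-- Discrete mass identity for the dual SL scheme of the stationary FPK
equation. Given `λ₁, λ₂ > 0`, nonnegative summable sequences `G₁, G₂` satisfying the
scheme with nonnegative interpolation weights `β` forming a partition of unity
(`∑_i β_i(x_k + h s_{k,j}) = 1`), and total mass `∑ G₁ + ∑ G₂ = 1/Δx`, then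
`(∑_i G_{i,j}) Δx = λ_{3−j}/(λ₁+λ₂)` for `j = 1, 2`.
Here `β j i k` denotes `β_i(x_k + h s_{k,j})`. -/
theorem stmt_8 (lam1 lam2 h Δx : ℝ) (hlam1 : 0 < lam1) (hlam2 : 0 < lam2)
    (hh : 0 < h) (hΔx : 0 < Δx)
    (G1 G2 : ℕ → ℝ) (hG1 : ∀ i, 0 ≤ G1 i) (hG2 : ∀ i, 0 ≤ G2 i)
    (hS1 : Summable G1) (hS2 : Summable G2)
    (β1 β2 : ℕ → ℕ → ℝ)
    (hβ1 : ∀ i k, 0 ≤ β1 i k) (hβ2 : ∀ i k, 0 ≤ β2 i k)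
    (hβ1sum : ∀ k, HasSum (fun i => β1 i k) 1)
    (hβ2sum : ∀ k, HasSum (fun i => β2 i k) 1)
    (hdbl1 : Summable (fun p : ℕ × ℕ => β1 p.1 p.2 * G1 p.2))
    (hdbl2 : Summable (fun p : ℕ × ℕ => β2 p.1 p.2 * G2 p.2))
    (hscheme1 : ∀ i, G1 i = (1 - lam1 * h) * (∑' k, β1 i k * G1 k) + lam2 * h * G2 i)
    (hscheme2 : ∀ i, G2 i = (1 - lam2 * h) * (∑' k, β2 i k * G2 k) + lam1 * h * G1 i)
    (hmass : (∑' i, G1 i) + (∑' i, G2 i) = 1 / Δx) :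
    (∑' i, G1 i) * Δx = lam2 / (lam1 + lam2) ∧
    (∑' i, G2 i) * Δx = lam1 / (lam1 + lam2) := by
  have key := aux_sum lam1 lam2 h G1 G2 hS1 hS2 β1 hβ1sum hdbl1 hscheme1
  have hkey : lam1 * (∑' i, G1 i) = lam2 * (∑' i, G2 i) := by
    have := key
    field_simp at this
    nlinarith [this, hh]
  set S1 := ∑' i, G1 i
  set S2 := ∑' i, G2 i
  have hΔ : Δx ≠ 0 := ne_of_gt hΔx
  have hlam : lam1 + lam2 ≠ 0 := by positivity
  have hmass' : S1 + S2 = 1 / Δx := hmass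
  have hm : (S1 + S2) * Δx = 1 := by
    rw [hmass']; field_simp
  constructor
  · rw [eq_div_iff hlam]
    linear_combination Δx * hkey + lam2 * hm
  · rw [eq_div_iff hlam]
    linear_combination -Δx * hkey + lam1 * hm
end

section
/- Let ρ > 0, h > 0 with ρh < 1, λ ∈ [0, 1/h]. Let U, V : ℕ → ℝ be bounded with U_k ≤ V_k for all k, and let (q₁, q₂), (m₁, m₂) ∈ ℝ² with θ := q_j − m_j = max(q₁ − m₁, q₂ − m₂) ≥ 0. Define, for a set C ⊆ [0,∞), F(q, q̄, W) = ρq − (1−ρh)λ(q̄ − q) − sup_{c ∈ C} { u(c) + (1−ρh)(1−λh)(1/h)(Σ_k β_k(c) W_k − q) }, where u : [0,∞) → ℝ ∪ {−∞} and for each c the weights satisfy β_k(c) ≥ 0 and Σ_k β_k(c) = 1, and the supremum is finite. Then F(q_j, q_{3−j}, U + θ) − F(m_j, m_{3−j}, V) ≥ ρθ. -/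
open Set

/-- The SL scheme operator for one component:
`F(q, q̄, W) = ρ q − (1−ρh) λ (q̄ − q) −
  sup_{c ∈ C} { u(c) + (1−ρh)(1−λh)(1/h)(∑_k β_k(c) W_k − q) }`. -/
noncomputable def schemeOp (ρ h lam : ℝ) (C : Set ℝ) (u : ℝ → ℝ) (β : ℝ → ℕ → ℝ)
    (q qbar : ℝ) (W : ℕ → ℝ) : ℝ :=
  ρ * q - (1 - ρ * h) * lam * (qbar - q) -
    sSup {z : ℝ | ∃ c ∈ C,
      z = u c + (1 - ρ * h) * (1 - lam * h) * (1 / h) * ((∑' k, β c k * W k) - q)}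

/-! Since `θ = q_j − m_j` and the weights `β_k(c)` sum to one, adding `θ` to `U` and to `q_j`
leaves each argument `∑ β_k(c) W_k − q` of the supremum unchanged, so `U ≤ V` makes the first
supremum at most the second. The coupling terms then contribute `(1−ρh)λ(θ − (q̄ − m̄)) ≥ 0`,
because `θ` is the largest of the two gaps, and what remains is `ρ (q_j − m_j) = ρ θ`. -/

section WeightedSums

variable {ι : Type*} {β W : ι → ℝ}

lemma summable_mul_of_abs_le (hβ0 : ∀ k, 0 ≤ β k) (hβ : Summable β) {M : ℝ}
    (hW : ∀ k, |W k| ≤ M) : Summable fun k => β k * W k :=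
  Summable.of_norm_bounded (hβ.mul_right M) fun k => by
    rw [Real.norm_eq_abs, abs_mul, abs_of_nonneg (hβ0 k)]
    exact mul_le_mul_of_nonneg_left (hW k) (hβ0 k)

lemma tsum_mul_add_const (hβ1 : HasSum β 1) (hW : Summable fun k => β k * W k) (θ : ℝ) :
    ∑' k, β k * (W k + θ) = ∑' k, β k * W k + θ := by
  simpa [mul_add] using (hW.hasSum.add (hβ1.mul_right θ)).tsum_eq

end WeightedSums

lemma Real.sSup_exists_eq_mono {α : Type*} {C : Set α} {f g : α → ℝ}
    (hg : BddAbove {z | ∃ c ∈ C, z = g c}) (hfg : ∀ c ∈ C, f c ≤ g c) :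
    sSup {z | ∃ c ∈ C, z = f c} ≤ sSup {z | ∃ c ∈ C, z = g c} := by
  rcases C.eq_empty_or_nonempty with rfl | ⟨c₀, hc₀⟩
  · simp
  · refine csSup_le ⟨f c₀, c₀, hc₀, rfl⟩ ?_
    rintro _ ⟨c, hc, rfl⟩
    exact (hfg c hc).trans (le_csSup hg ⟨c, hc, rfl⟩)

lemma le_max_fin_two {α : Type*} [LinearOrder α] (a : Fin 2 → α) (i : Fin 2) : a i ≤ max (a 0) (a 1) := by
  fin_cases i <;> simp

section SchemeOp

variable {ρ h lam : ℝ} {C : Set ℝ} {u : ℝ → ℝ} {β : ℝ → ℕ → ℝ}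

lemma le_schemeOp_sub_schemeOp (hh : 0 < h) (hρh : ρ * h < 1) (hlamh : lam * h ≤ 1)
    {q qbar q' qbar' : ℝ} {W W' : ℕ → ℝ}
    (hbd : BddAbove {z : ℝ | ∃ c ∈ C,
      z = u c + (1 - ρ * h) * (1 - lam * h) * (1 / h) * ((∑' k, β c k * W' k) - q')})
    (hle : ∀ c ∈ C, (∑' k, β c k * W k) - q ≤ (∑' k, β c k * W' k) - q') :
    ρ * (q - q') - (1 - ρ * h) * lam * ((qbar - q) - (qbar' - q')) ≤
      schemeOp ρ h lam C u β q qbar W - schemeOp ρ h lam C u β q' qbar' W' := by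
  have hcoef : 0 ≤ (1 - ρ * h) * (1 - lam * h) * (1 / h) := by
    have : 0 ≤ 1 - ρ * h := by linarith
    have : 0 ≤ 1 - lam * h := by linarith
    positivity
  have hsup := Real.sSup_exists_eq_mono
    (f := fun c => u c + (1 - ρ * h) * (1 - lam * h) * (1 / h) * ((∑' k, β c k * W k) - q))
    hbd fun c hc => by gcongr u c + _ * ?_; exact hle c hc
  unfold schemeOp
  linarith

end SchemeOp

theorem stmt_9_general (ρ h lam : ℝ) (hh : 0 < h) (hρh : ρ * h < 1)
    (hlam0 : 0 ≤ lam) (hlamh : lam * h ≤ 1)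
    (C : Set ℝ)
    (u : ℝ → ℝ) (β : ℝ → ℕ → ℝ)
    (hβ0 : ∀ c k, 0 ≤ β c k) (hβ1 : ∀ c, HasSum (fun k => β c k) 1)
    (U V : ℕ → ℝ) (hUbd : ∃ M, ∀ k, |U k| ≤ M) (hVbd : ∃ M, ∀ k, |V k| ≤ M)
    (hUV : ∀ k, U k ≤ V k)
    (q m : Fin 2 → ℝ) (j : Fin 2) (θ : ℝ)
    (hθ : θ = q j - m j) (hθmax : θ = max (q 0 - m 0) (q 1 - m 1))
    (hbd2 : BddAbove {z : ℝ | ∃ c ∈ C,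
      z = u c + (1 - ρ * h) * (1 - lam * h) * (1 / h) * ((∑' k, β c k * V k) - m j)}) :
    schemeOp ρ h lam C u β (q j) (q (1 - j)) (fun k => U k + θ) -
      schemeOp ρ h lam C u β (m j) (m (1 - j)) V ≥ ρ * θ := by
  obtain ⟨M, hM⟩ := hUbd
  obtain ⟨N, hN⟩ := hVbd
  have hle : ∀ c ∈ C,
      (∑' k, β c k * (U k + θ)) - q j ≤ (∑' k, β c k * V k) - m j := fun c _ => by
    have hsU := summable_mul_of_abs_le (hβ0 c) (hβ1 c).summable hM
    have hsV := summable_mul_of_abs_le (hβ0 c) (hβ1 c).summable hN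
    have hUV_sum : ∑' k, β c k * U k ≤ ∑' k, β c k * V k :=
      hsU.tsum_le_tsum (fun k => mul_le_mul_of_nonneg_left (hUV k) (hβ0 c k)) hsV
    rw [tsum_mul_add_const (hβ1 c) hsU]
    linarith
  have hgap : q (1 - j) - m (1 - j) ≤ θ := hθmax ▸ le_max_fin_two (q - m) (1 - j)
  have hcoupling : 0 ≤ (1 - ρ * h) * lam * ((m (1 - j) - m j) - (q (1 - j) - q j)) :=
    mul_nonneg (mul_nonneg (by linarith) hlam0) (by linarith)
  refine le_trans ?_ (le_schemeOp_sub_schemeOp hh hρh hlamh hbd2 hle)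
  rw [← hθ]
  linarith

/-- Monotonicity of the SL scheme operator. If `U ≤ V` pointwise with `U, V`
bounded, and `θ = q_j − m_j = max(q₁−m₁, q₂−m₂) ≥ 0`, then
`F(q_j, q_{j̄}, U + θ) − F(m_j, m_{j̄}, V) ≥ ρ θ`, provided the interpolation weights are
nonnegative and sum to one and the suprema involved are finite. -/
theorem stmt_9 (ρ h lam : ℝ) (hρ : 0 < ρ) (hh : 0 < h) (hρh : ρ * h < 1)
    (hlam0 : 0 ≤ lam) (hlamh : lam * h ≤ 1)
    (C : Set ℝ) (hC : C.Nonempty) (hCsub : C ⊆ Ici 0)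
    (u : ℝ → ℝ) (β : ℝ → ℕ → ℝ)
    (hβ0 : ∀ c k, 0 ≤ β c k) (hβ1 : ∀ c, HasSum (fun k => β c k) 1)
    (U V : ℕ → ℝ) (hUbd : ∃ M, ∀ k, |U k| ≤ M) (hVbd : ∃ M, ∀ k, |V k| ≤ M)
    (hUV : ∀ k, U k ≤ V k)
    (q m : Fin 2 → ℝ) (j : Fin 2) (θ : ℝ)
    (hθ : θ = q j - m j) (hθmax : θ = max (q 0 - m 0) (q 1 - m 1)) (hθ0 : 0 ≤ θ)
    (hbd1 : BddAbove {z : ℝ | ∃ c ∈ C,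
      z = u c + (1 - ρ * h) * (1 - lam * h) * (1 / h) *
        ((∑' k, β c k * (U k + θ)) - q j)})
    (hbd2 : BddAbove {z : ℝ | ∃ c ∈ C,
      z = u c + (1 - ρ * h) * (1 - lam * h) * (1 / h) * ((∑' k, β c k * V k) - m j)}) :
    schemeOp ρ h lam C u β (q j) (q (1 - j)) (fun k => U k + θ) -
      schemeOp ρ h lam C u β (m j) (m (1 - j)) V ≥ ρ * θ :=
  stmt_9_general ρ h lam hh hρh hlam0 hlamh C u β hβ0 hβ1 U V hUbd hVbd hUV q m j θ hθ hθmax hbd2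
end

section
/- In the policy iteration method for the discrete coupled HJB system, the sequence of value functions is monotone nondecreasing: V^(ι) ≤ V^(ι+1) componentwise for all ι ∈ ℕ, and since each V^(ι) ≤ 0 (comparison with the zero supersolution), the sequence converges pointwise to the unique bounded solution of the discrete Bellman equation. -/
open Filter

/-- The Bellman right-hand side for consumption `c` at node `(i,j)` given value
function `W`. -/
noncomputable def bellmanRHS (ρ h r : ℝ) (lam y : Fin 2 → ℝ) (u : ℝ → ℝ)
    (β : ℕ → ℝ → ℝ) (x : ℕ → ℝ) (W : ℕ → Fin 2 → ℝ) (i : ℕ) (j : Fin 2) (c : ℝ) : ℝ :=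
  h * u c + (1 - ρ * h) *
    (lam j * h * W i (1 - j) +
      (1 - lam j * h) * ∑' k, β k (x i + h * (r * x i + y j - c)) * W k j)

/-- `W` solves the discrete Bellman equation. -/
def SolvesBellman (ρ h r : ℝ) (lam y : Fin 2 → ℝ) (u : ℝ → ℝ)
    (β : ℕ → ℝ → ℝ) (x : ℕ → ℝ) (C : ℕ → Fin 2 → Set ℝ) (W : ℕ → Fin 2 → ℝ) : Prop :=
  ∀ i j, W i j = sSup ((bellmanRHS ρ h r lam y u β x W i j) '' C i j)

/-!
For a fixed policy, `W ↦ bellmanRHS … W` averages the values of `W` with nonnegative weights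
summing to one (`λ_j h ∈ [0,1]`, `β(·, z)` a probability vector) and damps the result by
`1 - ρh < 1`. It is therefore monotone and a contraction for the sup norm, which gives the
comparison principle: a bounded subsolution of the policy-evaluation equation lies below a
bounded supersolution. Policy improvement makes `V^(ι)` a subsolution of the equation solved by
`V^(ι+1)`, and `0` is a supersolution because `u ≤ 0`. The increasing sequence is bounded
between `V^(0)` and `0`, so it converges; passing to the limit in the evaluation and improvement
inequalities (dominated convergence in the sum over `k`) shows the limit solves the Bellman
equation, and the contraction estimate, pushed through the suprema over controls, makes
bounded solutions unique.
-/

section ProbabilityWeights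

variable {p f g : ℕ → ℝ}

theorem summable_mul_of_abs_le_s13 (hp0 : ∀ k, 0 ≤ p k) (hp : Summable p) {M : ℝ}
    (hf : ∀ k, |f k| ≤ M) : Summable fun k => p k * f k :=
  Summable.of_norm_bounded (hp.mul_right M) fun k => by
    rw [Real.norm_eq_abs, abs_mul, abs_of_nonneg (hp0 k)]
    exact mul_le_mul_of_nonneg_left (hf k) (hp0 k)

theorem tsum_mul_sub_tsum_mul_le (hp0 : ∀ k, 0 ≤ p k) (hp1 : HasSum p 1) {Mf Mg S : ℝ}
    (hf : ∀ k, |f k| ≤ Mf) (hg : ∀ k, |g k| ≤ Mg) (hS : ∀ k, f k - g k ≤ S) :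
    ∑' k, p k * f k - ∑' k, p k * g k ≤ S := by
  have hfs := summable_mul_of_abs_le_s13 hp0 hp1.summable hf
  have hgs := summable_mul_of_abs_le_s13 hp0 hp1.summable hg
  calc ∑' k, p k * f k - ∑' k, p k * g k = ∑' k, (p k * f k - p k * g k) :=
        (hfs.tsum_sub hgs).symm
    _ ≤ ∑' k, p k * S :=
        (hfs.sub hgs).tsum_le_tsum (fun k => by nlinarith [hp0 k, hS k])
          (hp1.mul_right S).summable
    _ = S := by rw [(hp1.mul_right S).tsum_eq, one_mul]

theorem tendsto_tsum_mul_of_abs_le {α : Type*} {l : Filter α} {F : α → ℕ → ℝ}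
    (hp0 : ∀ k, 0 ≤ p k) (hp : Summable p) {M : ℝ} (hF : ∀ n k, |F n k| ≤ M)
    (hlim : ∀ k, Tendsto (F · k) l (nhds (f k))) :
    Tendsto (fun n => ∑' k, p k * F n k) l (nhds (∑' k, p k * f k)) :=
  tendsto_tsum_of_dominated_convergence (hp.mul_right M)
    (fun k => (hlim k).const_mul (p k)) (Eventually.of_forall fun n k => by
      rw [Real.norm_eq_abs, abs_mul, abs_of_nonneg (hp0 k)]
      exact mul_le_mul_of_nonneg_left (hF n k) (hp0 k))

end ProbabilityWeights

theorem nonpos_of_le_imp_le_mul {ι κ : Type*} [Nonempty ι] [Nonempty κ] {Δ : ι → κ → ℝ}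
    {q : ℝ} (hq : q < 1) (hΔ : ∃ M, ∀ i j, Δ i j ≤ M)
    (hcontr : ∀ S, (∀ i j, Δ i j ≤ S) → ∀ i j, Δ i j ≤ q * S) : ∀ i j, Δ i j ≤ 0 := by
  obtain ⟨M, hM⟩ := hΔ
  have hbdd : BddAbove (Set.range fun a : ι × κ => Δ a.1 a.2) :=
    ⟨M, by rintro _ ⟨a, rfl⟩; exact hM a.1 a.2⟩
  set S := ⨆ a : ι × κ, Δ a.1 a.2
  have hle : ∀ i j, Δ i j ≤ S := fun i j => le_ciSup hbdd (i, j)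
  have hS : S ≤ q * S := ciSup_le fun a => hcontr S hle a.1 a.2
  have hS0 : S ≤ 0 := by nlinarith
  exact fun i j => (hle i j).trans hS0

theorem csSup_image_sub_csSup_image_le {α : Type*} {s : Set α} {f g : α → ℝ} {D : ℝ}
    (hs : s.Nonempty) (hg : BddAbove (g '' s)) (hfg : ∀ a ∈ s, f a - g a ≤ D) :
    sSup (f '' s) - sSup (g '' s) ≤ D := by
  rw [sub_le_iff_le_add]
  refine csSup_le (hs.image f) ?_
  rintro _ ⟨a, ha, rfl⟩
  linarith [hfg a ha, le_csSup hg (Set.mem_image_of_mem g ha)]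

section Bellman

variable {ρ h r : ℝ} {lam y : Fin 2 → ℝ} {u : ℝ → ℝ} {β : ℕ → ℝ → ℝ} {x : ℕ → ℝ}

local notation "𝒯" => bellmanRHS ρ h r lam y u β x

theorem bellmanRHS_zero (i : ℕ) (j : Fin 2) (c : ℝ) : 𝒯 0 i j c = h * u c := by
  simp [bellmanRHS]

theorem bellmanRHS_sub_le (hh : 0 < h) (hρh : ρ * h < 1) (hlam0 : ∀ j, 0 ≤ lam j)
    (hlamh : ∀ j, lam j * h ≤ 1) (hβ0 : ∀ k z, 0 ≤ β k z)
    (hβ1 : ∀ z, HasSum (fun k => β k z) 1) {W W' : ℕ → Fin 2 → ℝ}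
    (hW : ∃ M, ∀ i j, |W i j| ≤ M) (hW' : ∃ M, ∀ i j, |W' i j| ≤ M) {S : ℝ}
    (hS : ∀ i j, W i j - W' i j ≤ S) (i : ℕ) (j : Fin 2) (c : ℝ) :
    𝒯 W i j c - 𝒯 W' i j c ≤ (1 - ρ * h) * S := by
  obtain ⟨M, hM⟩ := hW
  obtain ⟨M', hM'⟩ := hW'
  set z := x i + h * (r * x i + y j - c)
  have hsum : ∑' k, β k z * W k j - ∑' k, β k z * W' k j ≤ S :=
    tsum_mul_sub_tsum_mul_le (hβ0 · z) (hβ1 z) (fun k => hM k j) (fun k => hM' k j)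
      (fun k => hS k j)
  have ha : 0 ≤ lam j * h := mul_nonneg (hlam0 j) hh.le
  calc 𝒯 W i j c - 𝒯 W' i j c
      = (1 - ρ * h) * (lam j * h * (W i (1 - j) - W' i (1 - j)) +
          (1 - lam j * h) * (∑' k, β k z * W k j - ∑' k, β k z * W' k j)) := by
        simp only [bellmanRHS, z]
        ring
    _ ≤ (1 - ρ * h) * (lam j * h * S + (1 - lam j * h) * S) := by
        gcongr
        · exact hS i (1 - j)
        · linarith [hlamh j]
    _ = (1 - ρ * h) * S := by ring

theorem bellmanRHS_mono (hh : 0 < h) (hρh : ρ * h < 1) (hlam0 : ∀ j, 0 ≤ lam j)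
    (hlamh : ∀ j, lam j * h ≤ 1) (hβ0 : ∀ k z, 0 ≤ β k z)
    (hβ1 : ∀ z, HasSum (fun k => β k z) 1) {W W' : ℕ → Fin 2 → ℝ}
    (hW : ∃ M, ∀ i j, |W i j| ≤ M) (hW' : ∃ M, ∀ i j, |W' i j| ≤ M)
    (hle : ∀ i j, W i j ≤ W' i j) (i : ℕ) (j : Fin 2) (c : ℝ) : 𝒯 W i j c ≤ 𝒯 W' i j c := by
  have hdiff : 𝒯 W i j c - 𝒯 W' i j c ≤ (1 - ρ * h) * 0 :=
    bellmanRHS_sub_le hh hρh hlam0 hlamh hβ0 hβ1 hW hW' (fun i j => sub_nonpos.2 (hle i j)) i j c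
  linarith

theorem bddAbove_bellmanRHS_image (hh : 0 < h) (hρh : ρ * h < 1) (hlam0 : ∀ j, 0 ≤ lam j)
    (hlamh : ∀ j, lam j * h ≤ 1) (hu : ∀ c, u c ≤ 0) (hβ0 : ∀ k z, 0 ≤ β k z)
    (hβ1 : ∀ z, HasSum (fun k => β k z) 1) {W : ℕ → Fin 2 → ℝ}
    (hW : ∃ M, ∀ i j, |W i j| ≤ M) (i : ℕ) (j : Fin 2) (s : Set ℝ) :
    BddAbove (𝒯 W i j '' s) := by
  obtain ⟨M, hM⟩ := hW
  refine ⟨(1 - ρ * h) * M, ?_⟩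
  rintro _ ⟨c, -, rfl⟩
  have hdiff : 𝒯 W i j c - 𝒯 0 i j c ≤ (1 - ρ * h) * M :=
    bellmanRHS_sub_le hh hρh hlam0 hlamh hβ0 hβ1 ⟨M, hM⟩ ⟨0, by simp⟩
      (fun i j => (sub_zero (W i j)).trans_le (le_of_abs_le (hM i j))) i j c
  rw [bellmanRHS_zero] at hdiff
  nlinarith [hu c]

/-- Discrete comparison principle for the policy-evaluation equation of a policy `c`. -/
theorem le_of_le_bellmanRHS_of_bellmanRHS_le (hρ : 0 < ρ) (hh : 0 < h) (hρh : ρ * h < 1)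
    (hlam0 : ∀ j, 0 ≤ lam j) (hlamh : ∀ j, lam j * h ≤ 1) (hβ0 : ∀ k z, 0 ≤ β k z)
    (hβ1 : ∀ z, HasSum (fun k => β k z) 1) {W W' : ℕ → Fin 2 → ℝ}
    (hW : ∃ M, ∀ i j, |W i j| ≤ M) (hW' : ∃ M, ∀ i j, |W' i j| ≤ M) (c : ℕ → Fin 2 → ℝ)
    (hsub : ∀ i j, W i j ≤ 𝒯 W i j (c i j)) (hsuper : ∀ i j, 𝒯 W' i j (c i j) ≤ W' i j)
    (i : ℕ) (j : Fin 2) : W i j ≤ W' i j := by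
  obtain ⟨M, hM⟩ := hW
  obtain ⟨M', hM'⟩ := hW'
  have hΔ : ∀ i j, W i j - W' i j ≤ 0 := by
    refine nonpos_of_le_imp_le_mul (q := 1 - ρ * h) (by linarith [mul_pos hρ hh])
      ⟨M + M', fun i j => by linarith [le_of_abs_le (hM i j), neg_le_of_abs_le (hM' i j)]⟩
      fun S hS i j => ?_
    have hdiff : 𝒯 W i j (c i j) - 𝒯 W' i j (c i j) ≤ (1 - ρ * h) * S :=
      bellmanRHS_sub_le hh hρh hlam0 hlamh hβ0 hβ1 ⟨M, hM⟩ ⟨M', hM'⟩ hS i j (c i j)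
    linarith [hsub i j, hsuper i j]
  exact sub_nonpos.1 (hΔ i j)

theorem le_of_solvesBellman (hρ : 0 < ρ) (hh : 0 < h) (hρh : ρ * h < 1)
    (hlam0 : ∀ j, 0 ≤ lam j) (hlamh : ∀ j, lam j * h ≤ 1) (hu : ∀ c, u c ≤ 0)
    (hβ0 : ∀ k z, 0 ≤ β k z) (hβ1 : ∀ z, HasSum (fun k => β k z) 1)
    {C : ℕ → Fin 2 → Set ℝ} (hC : ∀ i j, (C i j).Nonempty) {W W' : ℕ → Fin 2 → ℝ}
    (hW : ∃ M, ∀ i j, |W i j| ≤ M) (hW' : ∃ M, ∀ i j, |W' i j| ≤ M)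
    (hsolW : SolvesBellman ρ h r lam y u β x C W) (hsolW' : SolvesBellman ρ h r lam y u β x C W')
    (i : ℕ) (j : Fin 2) : W i j ≤ W' i j := by
  obtain ⟨M, hM⟩ := hW
  obtain ⟨M', hM'⟩ := hW'
  have hΔ : ∀ i j, W i j - W' i j ≤ 0 := by
    refine nonpos_of_le_imp_le_mul (q := 1 - ρ * h) (by linarith [mul_pos hρ hh])
      ⟨M + M', fun i j => by linarith [le_of_abs_le (hM i j), neg_le_of_abs_le (hM' i j)]⟩
      fun S hS i j => ?_
    rw [hsolW i j, hsolW' i j]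
    exact csSup_image_sub_csSup_image_le (hC i j)
      (bddAbove_bellmanRHS_image hh hρh hlam0 hlamh hu hβ0 hβ1 ⟨M', hM'⟩ i j _)
      fun c _ => bellmanRHS_sub_le hh hρh hlam0 hlamh hβ0 hβ1 ⟨M, hM⟩ ⟨M', hM'⟩ hS i j c
  exact sub_nonpos.1 (hΔ i j)

theorem tendsto_bellmanRHS (hβ0 : ∀ k z, 0 ≤ β k z) (hβ1 : ∀ z, HasSum (fun k => β k z) 1)
    {V : ℕ → ℕ → Fin 2 → ℝ} {W : ℕ → Fin 2 → ℝ} {M : ℝ} (hV : ∀ ι i j, |V ι i j| ≤ M)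
    (hlim : ∀ i j, Tendsto (fun ι => V ι i j) atTop (nhds (W i j)))
    (i : ℕ) (j : Fin 2) (c : ℝ) :
    Tendsto (fun ι => 𝒯 (V ι) i j c) atTop (nhds (𝒯 W i j c)) := by
  set z := x i + h * (r * x i + y j - c)
  have hsum : Tendsto (fun ι => ∑' k, β k z * V ι k j) atTop (nhds (∑' k, β k z * W k j)) :=
    tendsto_tsum_mul_of_abs_le (hβ0 · z) (hβ1 z).summable (fun ι k => hV ι k j)
      (fun k => hlim k j)
  exact tendsto_const_nhds.add
    ((((hlim i (1 - j)).const_mul _).add (hsum.const_mul _)).const_mul _)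

theorem solvesBellman_of_tendsto_policyIteration (hh : 0 < h) (hρh : ρ * h < 1)
    (hlam0 : ∀ j, 0 ≤ lam j) (hlamh : ∀ j, lam j * h ≤ 1) (hu : ∀ c, u c ≤ 0)
    (hβ0 : ∀ k z, 0 ≤ β k z) (hβ1 : ∀ z, HasSum (fun k => β k z) 1)
    {C : ℕ → Fin 2 → Set ℝ} (hC : ∀ i j, (C i j).Nonempty)
    {cpol : ℕ → ℕ → Fin 2 → ℝ} (hcpol : ∀ ι i j, cpol ι i j ∈ C i j)
    {V : ℕ → ℕ → Fin 2 → ℝ} {M : ℝ} (hVM : ∀ ι i j, |V ι i j| ≤ M)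
    (hmono : ∀ ι i j, V ι i j ≤ V (ι + 1) i j)
    (heval : ∀ ι i j, V ι i j = 𝒯 (V ι) i j (cpol ι i j))
    (hupdate : ∀ ι i j, ∀ c ∈ C i j, 𝒯 (V ι) i j c ≤ 𝒯 (V ι) i j (cpol (ι + 1) i j))
    {Vstar : ℕ → Fin 2 → ℝ} (hlim : ∀ i j, Tendsto (fun ι => V ι i j) atTop (nhds (Vstar i j))) :
    SolvesBellman ρ h r lam y u β x C Vstar := by
  have hVstarM : ∀ i j, |Vstar i j| ≤ M := fun i j =>
    le_of_tendsto' (hlim i j).abs fun ι => hVM ι i j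
  have hVle : ∀ ι i j, V ι i j ≤ Vstar i j := fun ι i j =>
    (monotone_nat_of_le_succ fun n => hmono n i j).ge_of_tendsto (hlim i j) ι
  intro i j
  have hbdd : BddAbove (𝒯 Vstar i j '' C i j) :=
    bddAbove_bellmanRHS_image hh hρh hlam0 hlamh hu hβ0 hβ1 ⟨M, hVstarM⟩ i j (C i j)
  refine le_antisymm (le_of_tendsto' (hlim i j) fun ι => ?_) (csSup_le ((hC i j).image _) ?_)
  · calc V ι i j = 𝒯 (V ι) i j (cpol ι i j) := heval ι i j
      _ ≤ 𝒯 Vstar i j (cpol ι i j) :=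
        bellmanRHS_mono hh hρh hlam0 hlamh hβ0 hβ1 ⟨M, hVM ι⟩ ⟨M, hVstarM⟩ (hVle ι) i j _
      _ ≤ sSup (𝒯 Vstar i j '' C i j) := le_csSup hbdd ⟨_, hcpol ι i j, rfl⟩
  · rintro _ ⟨c, hc, rfl⟩
    refine le_of_tendsto' (tendsto_bellmanRHS hβ0 hβ1 hVM hlim i j c) fun ι => ?_
    calc 𝒯 (V ι) i j c ≤ 𝒯 (V ι) i j (cpol (ι + 1) i j) := hupdate ι i j c hc
      _ ≤ 𝒯 (V (ι + 1)) i j (cpol (ι + 1) i j) :=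
        bellmanRHS_mono hh hρh hlam0 hlamh hβ0 hβ1 ⟨M, hVM ι⟩ ⟨M, hVM (ι + 1)⟩ (hmono ι) i j _
      _ = V (ι + 1) i j := (heval (ι + 1) i j).symm
      _ ≤ Vstar i j := hVle (ι + 1) i j

end Bellman

/-- In policy iteration (Howard's algorithm) for the discrete coupled HJB
system, the value functions are monotone nondecreasing, `V^(ι) ≤ V^(ι+1)`, each
`V^(ι) ≤ 0` (comparison with the zero supersolution, using `u ≤ 0`), and the sequence
converges pointwise to the unique bounded solution of the discrete Bellman equation. -/
theorem stmt_13 (ρ h r : ℝ) (hρ : 0 < ρ) (hh : 0 < h) (hρh : ρ * h < 1)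
    (lam y : Fin 2 → ℝ) (hlam0 : ∀ j, 0 ≤ lam j) (hlamh : ∀ j, lam j * h ≤ 1)
    (u : ℝ → ℝ) (hu : ∀ c, u c ≤ 0)
    (β : ℕ → ℝ → ℝ) (hβ0 : ∀ k z, 0 ≤ β k z) (hβ1 : ∀ z, HasSum (fun k => β k z) 1)
    (x : ℕ → ℝ) (C : ℕ → Fin 2 → Set ℝ) (hC : ∀ i j, (C i j).Nonempty)
    (cpol : ℕ → ℕ → Fin 2 → ℝ) (hcpol : ∀ ι i j, cpol ι i j ∈ C i j)
    (V : ℕ → ℕ → Fin 2 → ℝ)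
    (hVbd : ∀ ι, ∃ M, ∀ i j, |V ι i j| ≤ M)
    (heval : ∀ ι i j, V ι i j = bellmanRHS ρ h r lam y u β x (V ι) i j (cpol ι i j))
    (hupdate : ∀ ι i j, ∀ c ∈ C i j,
      bellmanRHS ρ h r lam y u β x (V ι) i j c
        ≤ bellmanRHS ρ h r lam y u β x (V ι) i j (cpol (ι + 1) i j)) :
    (∀ ι i j, V ι i j ≤ V (ι + 1) i j) ∧
    (∀ ι i j, V ι i j ≤ 0) ∧
    ∃ Vstar : ℕ → Fin 2 → ℝ,
      (∃ M, ∀ i j, |Vstar i j| ≤ M) ∧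
      SolvesBellman ρ h r lam y u β x C Vstar ∧
      (∀ i j, Tendsto (fun ι => V ι i j) atTop (nhds (Vstar i j))) ∧
      (∀ W : ℕ → Fin 2 → ℝ, (∃ M, ∀ i j, |W i j| ≤ M) →
        SolvesBellman ρ h r lam y u β x C W → W = Vstar) := by
  have mono : ∀ ι i j, V ι i j ≤ V (ι + 1) i j := fun ι =>
    le_of_le_bellmanRHS_of_bellmanRHS_le hρ hh hρh hlam0 hlamh hβ0 hβ1 (hVbd ι) (hVbd (ι + 1))
      (cpol (ι + 1)) (fun i j => (heval ι i j).trans_le (hupdate ι i j _ (hcpol ι i j)))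
      (fun i j => (heval (ι + 1) i j).ge)
  have nonpos : ∀ ι i j, V ι i j ≤ 0 := fun ι =>
    le_of_le_bellmanRHS_of_bellmanRHS_le (W' := 0) hρ hh hρh hlam0 hlamh hβ0 hβ1 (hVbd ι)
      ⟨0, by simp⟩ (cpol ι) (fun i j => (heval ι i j).le) (fun i j => by
        rw [bellmanRHS_zero]
        exact mul_nonpos_of_nonneg_of_nonpos hh.le (hu _))
  have hmono : ∀ i j, Monotone fun ι => V ι i j := fun i j =>
    monotone_nat_of_le_succ fun ι => mono ι i j
  obtain ⟨M, hM⟩ := hVbd 0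
  have hVM : ∀ ι i j, |V ι i j| ≤ M := fun ι i j =>
    abs_le.2 ⟨(neg_le_of_abs_le (hM i j)).trans (hmono i j (Nat.zero_le ι)),
      (nonpos ι i j).trans ((abs_nonneg _).trans (hM i j))⟩
  have hlim : ∀ i j, Tendsto (fun ι => V ι i j) atTop (nhds (⨆ ι, V ι i j)) := fun i j =>
    tendsto_atTop_ciSup (hmono i j) ⟨0, by rintro _ ⟨ι, rfl⟩; exact nonpos ι i j⟩
  have hVstarM : ∀ i j, |⨆ ι, V ι i j| ≤ M := fun i j =>
    le_of_tendsto' (hlim i j).abs fun ι => hVM ι i j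
  have hsol := solvesBellman_of_tendsto_policyIteration hh hρh hlam0 hlamh hu hβ0 hβ1 hC hcpol
    hVM mono heval hupdate hlim
  refine ⟨mono, nonpos, _, ⟨M, hVstarM⟩, hsol, hlim, fun W hW hsolW => ?_⟩
  funext i j
  exact le_antisymm
    (le_of_solvesBellman hρ hh hρh hlam0 hlamh hu hβ0 hβ1 hC hW ⟨M, hVstarM⟩ hsolW hsol i j)
    (le_of_solvesBellman hρ hh hρh hlam0 hlamh hu hβ0 hβ1 hC ⟨M, hVstarM⟩ hW hsol hsolW i j)
end
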